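/- arXiv:2508.01957 — 3 statements merged into one kernel-verified Lean document; each statement's English description precedes it below -/
import Mathlib

section
/- In the indicator problem with d ≥ 3, the expected-posterior-entropy objective E_{x_U}[H(Y | x_U)] (where U is all features except the candidate i) is strictly larger when the candidate i is the indicator feature d+1 than when i is any of the first d features; i.e., sum_{k=0}^{d} C(d,k) 2^{-d} H_b(k/d) > (log 2)/d for d ≥ 3. -/
open Finset Real

/-- Marginal probability of `f = a` under the uniform distribution on a finite sample space. -/
noncomputable def pm {Ω A : Type*} [Fintype Ω] [DecidableEq A] (f : Ω → A) (a : A) : ℝ :=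
  ((Finset.univ.filter fun ω => f ω = a).card : ℝ) / (Fintype.card Ω)

/-- Joint probability of `f = a` and `g = b` under the uniform distribution. -/
noncomputable def pj {Ω A B : Type*} [Fintype Ω] [DecidableEq A] [DecidableEq B]
    (f : Ω → A) (g : Ω → B) (a : A) (b : B) : ℝ :=
  ((Finset.univ.filter fun ω => f ω = a ∧ g ω = b).card : ℝ) / (Fintype.card Ω)

/-- Mutual information of the discrete random variables `f` and `g` under the uniform
distribution, `I(f;g) = ∑ p(a,b) log (p(a,b)/(p(a)p(b)))` (terms with `p(a,b)=0` vanish). -/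
noncomputable def mi {Ω A B : Type*} [Fintype Ω] [Fintype A] [Fintype B]
    [DecidableEq A] [DecidableEq B] (f : Ω → A) (g : Ω → B) : ℝ :=
  ∑ a, ∑ b, pj f g a b * Real.log (pj f g a b / (pm f a * pm g b))

/-- Shannon entropy of the label Y = ω.1 ω.2 conditioned on an event E, under the uniform
distribution. -/
noncomputable def condEntY (d : ℕ) (E : Finset ((Fin d → Bool) × Fin d)) : ℝ :=
  ∑ y : Bool,
    Real.negMulLog (((E.filter fun ω => ω.1 ω.2 = y).card : ℝ) / (E.card : ℝ))

lemma fiber_count (d k : ℕ) :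
    ((univ : Finset (Fin d → Bool)).filter
      (fun b => (univ.filter fun j => b j = false).card = k)).card = d.choose k := by
  have h : d.choose k = (Finset.powersetCard k (univ : Finset (Fin d))).card := by
    rw [Finset.card_powersetCard]; simp
  rw [h]
  refine Finset.card_bij' (fun b _ => univ.filter fun j => b j = false)
      (fun s _ => fun j => decide (j ∉ s)) ?_ ?_ ?_ ?_
  · intro b hb
    simp only [Finset.mem_filter, Finset.mem_univ, true_and] at hb
    simp [Finset.mem_powersetCard, hb]
  · intro s hs
    simp only [Finset.mem_powersetCard] at hs
    simp only [Finset.mem_filter, Finset.mem_univ, true_and]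
    rw [← hs.2]
    congr 1
    ext j
    simp
  · intro b hb
    funext j
    simp
  · intro s hs
    ext j
    simp

lemma condEnt_cell (d : ℕ) (i : Fin d) (b : {k : Fin d // k ≠ i} → Bool) (j : Fin d) :
    condEntY d (Finset.univ.filter fun ω =>
        (∀ (k : Fin d) (h : k ≠ i), ω.1 k = b ⟨k, h⟩) ∧ ω.2 = j)
      = if j = i then Real.log 2 else 0 := by
  set fc : Bool → (Fin d → Bool) := fun c k => if h : k = i then c else b ⟨k, h⟩ with hfc
  have hfci : ∀ c, fc c i = c := fun c => by simp [hfc]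
  have hfck : ∀ c k (h : k ≠ i), fc c k = b ⟨k, h⟩ := fun c k h => by simp [hfc, h]
  have hne : ((fc true, j) : (Fin d → Bool) × Fin d) ≠ (fc false, j) := by
    intro h
    have := congrArg (fun p => p.1 i) h
    simp [hfci] at this
  have hE : (Finset.univ.filter fun ω : (Fin d → Bool) × Fin d =>
        (∀ (k : Fin d) (h : k ≠ i), ω.1 k = b ⟨k, h⟩) ∧ ω.2 = j)
      = {(fc true, j), (fc false, j)} := by
    ext ω
    simp only [Finset.mem_filter, Finset.mem_univ, true_and, Finset.mem_insert,
      Finset.mem_singleton]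
    constructor
    · rintro ⟨h1, h2⟩
      rcases Bool.eq_false_or_eq_true (ω.1 i) with hi | hi
      · left
        have : ω.1 = fc true := by
          funext k
          by_cases hk : k = i
          · subst hk; rw [hi, hfci]
          · rw [h1 k hk, hfck]
        rw [← this, ← h2]
      · right
        have : ω.1 = fc false := by
          funext k
          by_cases hk : k = i
          · subst hk; rw [hi, hfci]
          · rw [h1 k hk, hfck]
        rw [← this, ← h2]
    · rintro (rfl | rfl) <;> exact ⟨fun k h => hfck _ k h, rfl⟩
  have hcard : (Finset.univ.filter fun ω : (Fin d → Bool) × Fin d =>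
        (∀ (k : Fin d) (h : k ≠ i), ω.1 k = b ⟨k, h⟩) ∧ ω.2 = j).card = 2 := by
    rw [hE, Finset.card_insert_of_notMem (by simpa using hne), Finset.card_singleton]
  by_cases hj : j = i
  · subst hj
    have hfilt : ∀ y : Bool, (({((fc true, j) : (Fin d → Bool) × Fin d), (fc false, j)} :
        Finset _).filter fun ω => ω.1 ω.2 = y).card = 1 := by
      intro y
      cases y <;>
      · rw [Finset.filter_insert, Finset.filter_singleton]
        simp [hfci, hne]
    rw [condEntY, hcard]
    rw [Fintype.sum_bool, hE, hfilt, hfilt]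
    rw [if_pos rfl]
    simp [Real.negMulLog, Real.log_inv]
    ring
  · have hval : ∀ c : Bool, fc c j = b ⟨j, hj⟩ := fun c => hfck c j hj
    have hfilt : ∀ y : Bool, (({((fc true, j) : (Fin d → Bool) × Fin d), (fc false, j)} :
        Finset _).filter fun ω => ω.1 ω.2 = y).card = if b ⟨j, hj⟩ = y then 2 else 0 := by
      intro y
      rw [Finset.filter_insert, Finset.filter_singleton]
      simp only [hval]
      by_cases hy : b ⟨j, hj⟩ = y
      · rw [if_pos hy, if_pos hy, Finset.card_insert_of_notMem (by simpa using hne),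
          Finset.card_singleton, if_pos hy]
      · rw [if_neg hy, if_neg hy, Finset.card_empty, if_neg hy]
    rw [condEntY, hcard, Fintype.sum_bool, hE, hfilt, hfilt, if_neg hj]
    rcases Bool.eq_false_or_eq_true (b ⟨j, hj⟩) with hb | hb <;> rw [hb] <;> norm_num

lemma condEnt_row (d : ℕ) (hd : 0 < d) (b : Fin d → Bool) :
    condEntY d (Finset.univ.filter fun ω => ω.1 = b)
      = Real.binEntropy (((univ.filter fun j => b j = false).card : ℝ) / d) := by
  have hE : (Finset.univ.filter fun ω : (Fin d → Bool) × Fin d => ω.1 = b)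
      = (univ : Finset (Fin d)).image (fun j => (b, j)) := by
    ext ω
    simp only [Finset.mem_filter, Finset.mem_univ, true_and, Finset.mem_image]
    constructor
    · intro h
      exact ⟨ω.2, by rw [← h]⟩
    · rintro ⟨j, -, rfl⟩; rfl
  have hinj : Function.Injective (fun j : Fin d => (b, j)) := by
    intro x y h; simpa using h
  have hcard : ((Finset.univ.filter fun ω : (Fin d → Bool) × Fin d => ω.1 = b)).card = d := by
    rw [hE, Finset.card_image_of_injective _ hinj]; simp
  have hfilt : ∀ y : Bool,
      (((Finset.univ.filter fun ω : (Fin d → Bool) × Fin d => ω.1 = b)).filter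
        fun ω => ω.1 ω.2 = y).card = (univ.filter fun j => b j = y).card := by
    intro y
    rw [hE, Finset.filter_image, Finset.card_image_of_injective _ hinj]
  have hcc : (univ.filter fun j => b j = true).card
      = d - (univ.filter fun j => b j = false).card := by
    have h1 := Finset.card_filter_add_card_filter_not
      (s := (univ : Finset (Fin d))) (p := fun j => b j = false)
    have h2 : ((univ : Finset (Fin d)).filter fun j => ¬ (b j = false))
        = (univ.filter fun j => b j = true) := by
      apply Finset.filter_congr; intro j _; simp
    rw [h2] at h1
    simp only [Finset.card_univ, Fintype.card_fin] at h1
    omega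
  have hle : (univ.filter fun j => b j = false).card ≤ d := by
    simpa using Finset.card_filter_le (univ : Finset (Fin d)) (fun j => b j = false)
  rw [condEntY, Fintype.sum_bool, hcard, hfilt, hfilt, hcc,
    Real.binEntropy_eq_negMulLog_add_negMulLog_one_sub]
  have hd' : (d : ℝ) ≠ 0 := by positivity
  rw [Nat.cast_sub hle]
  field_simp
  ring

lemma rhs_eq (d : ℕ) (hd : 0 < d) :
    (∑ b : Fin d → Bool, ((2 : ℝ) ^ d)⁻¹ *
        condEntY d (Finset.univ.filter fun ω => ω.1 = b))
      = ∑ k ∈ Finset.range (d + 1),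
        (d.choose k : ℝ) / 2 ^ d * Real.binEntropy ((k : ℝ) / d) := by
  have hmap : ∀ b : Fin d → Bool, b ∈ (univ : Finset (Fin d → Bool)) →
      (univ.filter fun j => b j = false).card ∈ Finset.range (d + 1) := by
    intro b _
    simp only [Finset.mem_range]
    have := Finset.card_filter_le (univ : Finset (Fin d)) (fun j => b j = false)
    simp only [Finset.card_univ, Fintype.card_fin] at this
    omega
  calc (∑ b : Fin d → Bool, ((2 : ℝ) ^ d)⁻¹ *
        condEntY d (Finset.univ.filter fun ω => ω.1 = b))
      = ∑ b : Fin d → Bool, ((2 : ℝ) ^ d)⁻¹ *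
          Real.binEntropy ((((univ.filter fun j => b j = false).card : ℕ) : ℝ) / d) := by
        refine Finset.sum_congr rfl fun b _ => ?_
        rw [condEnt_row d hd]
    _ = ∑ k ∈ Finset.range (d + 1), ∑ b ∈ (univ : Finset (Fin d → Bool)).filter
          (fun b => (univ.filter fun j => b j = false).card = k),
          ((2 : ℝ) ^ d)⁻¹ * Real.binEntropy ((((univ.filter fun j => b j = false).card : ℕ) : ℝ) / d) := by
        rw [Finset.sum_fiberwise_of_maps_to hmap]
    _ = ∑ k ∈ Finset.range (d + 1),
        (d.choose k : ℝ) / 2 ^ d * Real.binEntropy ((k : ℝ) / d) := by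
        refine Finset.sum_congr rfl fun k _ => ?_
        rw [Finset.sum_congr rfl (g := fun _ => ((2 : ℝ) ^ d)⁻¹ * Real.binEntropy ((k : ℝ) / d))
          (fun b hb => by
            simp only [Finset.mem_filter] at hb
            rw [hb.2]),
          Finset.sum_const, fiber_count, nsmul_eq_mul]
        ring

lemma lhs_eq (d : ℕ) (hd : 0 < d) (i : Fin d) :
    (∑ b : {k : Fin d // k ≠ i} → Bool, ∑ j : Fin d,
        (1 / ((2 : ℝ) ^ (d - 1) * d)) *
          condEntY d (Finset.univ.filter fun ω =>
            (∀ (k : Fin d) (h : k ≠ i), ω.1 k = b ⟨k, h⟩) ∧ ω.2 = j))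
      = Real.log 2 / d := by
  have hcardfun : Fintype.card ({k : Fin d // k ≠ i} → Bool) = 2 ^ (d - 1) := by
    rw [Fintype.card_fun, Fintype.card_bool]
    congr 1
    rw [Fintype.card_subtype_compl, Fintype.card_subtype_eq, Fintype.card_fin]
  have hinner : ∀ b : {k : Fin d // k ≠ i} → Bool,
      (∑ j : Fin d, (1 / ((2 : ℝ) ^ (d - 1) * d)) *
          condEntY d (Finset.univ.filter fun ω =>
            (∀ (k : Fin d) (h : k ≠ i), ω.1 k = b ⟨k, h⟩) ∧ ω.2 = j))
        = (1 / ((2 : ℝ) ^ (d - 1) * d)) * Real.log 2 := by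
    intro b
    have : ∀ j : Fin d, (1 / ((2 : ℝ) ^ (d - 1) * d)) *
        condEntY d (Finset.univ.filter fun ω =>
          (∀ (k : Fin d) (h : k ≠ i), ω.1 k = b ⟨k, h⟩) ∧ ω.2 = j)
        = if j = i then (1 / ((2 : ℝ) ^ (d - 1) * d)) * Real.log 2 else 0 := by
      intro j
      rw [condEnt_cell]
      by_cases hj : j = i <;> simp [hj]
    rw [Finset.sum_congr rfl fun j _ => this j, Finset.sum_ite_eq' univ i]
    simp
  rw [Finset.sum_congr rfl fun b _ => hinner b, Finset.sum_const, Finset.card_univ, hcardfun,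
    nsmul_eq_mul]
  have h2 : ((2:ℝ) ^ (d-1)) ≠ 0 := by positivity
  have hd' : (d:ℝ) ≠ 0 := by positivity
  push_cast
  field_simp

lemma key_ineq (d : ℕ) (hd : 3 ≤ d) :
    Real.log 2 / d <
      ∑ k ∈ Finset.range (d + 1),
        (d.choose k : ℝ) / 2 ^ d * Real.binEntropy ((k : ℝ) / d) := by
  have hd0 : (0 : ℝ) < d := by positivity
  have hdR : (3 : ℝ) ≤ d := by exact_mod_cast hd
  -- monotone lower bound on middle terms
  have hmono : ∀ k : ℕ, 1 ≤ k → k ≤ d - 1 →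
      Real.binEntropy (1 / d) ≤ Real.binEntropy ((k : ℝ) / d) := by
    intro k hk1 hk2
    have hk2' : (k : ℝ) ≤ d - 1 := by
      have : (k : ℝ) ≤ ((d - 1 : ℕ) : ℝ) := by exact_mod_cast hk2
      rw [Nat.cast_sub (by omega)] at this
      simpa using this
    have hk1' : (1 : ℝ) ≤ k := by exact_mod_cast hk1
    have hp0 : (0:ℝ) ≤ 1 / d := by positivity
    have hpq : 1 / d ≤ (k : ℝ) / d := by gcongr
    have hq : (k : ℝ) / d ≤ 1 - 1 / d := by
      rw [div_le_iff₀ hd0]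
      have hdd : (1 - 1/(d:ℝ)) * d = d - 1 := by field_simp
      rw [hdd]; linarith
    -- binEntropy p ≤ binEntropy q when 0 ≤ p ≤ q ≤ 1 - p
    set p := 1 / (d:ℝ)
    set q := (k : ℝ) / d
    by_cases hhalf : q ≤ 2⁻¹
    · exact Real.binEntropy_strictMonoOn.monotoneOn
        ⟨hp0, hpq.trans hhalf⟩ ⟨hp0.trans hpq, hhalf⟩ hpq
    · push_neg at hhalf
      have h1q : 1 - q ≤ 2⁻¹ := by linarith
      have hp1q : p ≤ 1 - q := by linarith
      rw [← Real.binEntropy_one_sub q]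
      exact Real.binEntropy_strictMonoOn.monotoneOn
        ⟨hp0, hp1q.trans h1q⟩ ⟨by linarith, h1q⟩ hp1q
  have hlow : Real.log d / d ≤ Real.binEntropy (1 / d) := by
    rw [Real.binEntropy_eq_negMulLog_add_negMulLog_one_sub]
    have h1 : Real.negMulLog (1 / (d:ℝ)) = Real.log d / d := by
      rw [Real.negMulLog, one_div, Real.log_inv]
      field_simp
    have h2 : 0 ≤ Real.negMulLog (1 - 1 / (d:ℝ)) := by
      apply Real.negMulLog_nonneg
      · rw [sub_nonneg, div_le_one hd0]; linarith
      · have : 0 ≤ 1 / (d:ℝ) := by positivity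
        linarith
    linarith [h1]
  -- restrict sum to Ico 1 d
  have hsub : ∑ k ∈ Finset.Ico 1 d, (d.choose k : ℝ) / 2 ^ d * Real.binEntropy ((k : ℝ) / d)
      ≤ ∑ k ∈ Finset.range (d + 1), (d.choose k : ℝ) / 2 ^ d * Real.binEntropy ((k : ℝ) / d) := by
    apply Finset.sum_le_sum_of_subset_of_nonneg
    · intro k hk
      simp only [Finset.mem_Ico] at hk
      simp only [Finset.mem_range]
      omega
    · intro k hk _
      have hk' : (k : ℝ) / d ≤ 1 := by
        rw [div_le_one hd0]
        simp only [Finset.mem_range] at hk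
        exact_mod_cast Nat.lt_succ_iff.mp hk
      have : 0 ≤ Real.binEntropy ((k:ℝ)/d) := Real.binEntropy_nonneg (by positivity) hk'
      positivity
  have hstep : ∑ k ∈ Finset.Ico 1 d, (d.choose k : ℝ) / 2 ^ d * (Real.log d / d)
      ≤ ∑ k ∈ Finset.Ico 1 d, (d.choose k : ℝ) / 2 ^ d * Real.binEntropy ((k : ℝ) / d) := by
    apply Finset.sum_le_sum
    intro k hk
    simp only [Finset.mem_Ico] at hk
    have := (hlow.trans (hmono k hk.1 (by omega)))
    have hpos : (0:ℝ) ≤ (d.choose k : ℝ) / 2 ^ d := by positivity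
    exact mul_le_mul_of_nonneg_left this hpos
  have hchoose : ∑ k ∈ Finset.Ico 1 d, (d.choose k : ℝ) = 2 ^ d - 2 := by
    have h0 : ∑ k ∈ Finset.range (d + 1), (d.choose k : ℝ) = 2 ^ d := by
      rw [← Nat.cast_sum]
      exact_mod_cast congrArg (Nat.cast (R := ℝ)) (Nat.sum_range_choose d)
    have h1 : Finset.range (d + 1) = insert 0 (insert d (Finset.Ico 1 d)) := by
      ext k
      simp only [Finset.mem_range, Finset.mem_insert, Finset.mem_Ico]
      omega
    rw [h1] at h0
    rw [Finset.sum_insert (by simp; omega), Finset.sum_insert (by simp)] at h0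
    simp only [Nat.choose_zero_right, Nat.choose_self, Nat.cast_one] at h0
    linarith
  have hsum : ∑ k ∈ Finset.Ico 1 d, (d.choose k : ℝ) / 2 ^ d * (Real.log d / d)
      = (2 ^ d - 2) / 2 ^ d * (Real.log d / d) := by
    rw [← Finset.sum_mul, ← Finset.sum_div, hchoose]
  -- final numeric bound
  have hpow : (8 : ℝ) ≤ 2 ^ d := by
    calc (8:ℝ) = 2 ^ 3 := by norm_num
    _ ≤ 2 ^ d := by apply pow_le_pow_right₀ (by norm_num) hd
  have hfrac : (3 : ℝ) / 4 ≤ (2 ^ d - 2) / 2 ^ d := by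
    rw [div_le_div_iff₀ (by norm_num) (by positivity)]
    nlinarith
  have hlog3 : Real.log 2 < 3 / 4 * Real.log 3 := by
    have h : Real.log 16 < Real.log 27 := Real.log_lt_log (by norm_num) (by norm_num)
    have h16 : Real.log 16 = 4 * Real.log 2 := by
      rw [show (16:ℝ) = 2 ^ 4 by norm_num, Real.log_pow]; push_cast; ring
    have h27 : Real.log 27 = 3 * Real.log 3 := by
      rw [show (27:ℝ) = 3 ^ 3 by norm_num, Real.log_pow]; push_cast; ring
    rw [h16, h27] at h
    linarith
  have hlogd : Real.log 3 ≤ Real.log d := Real.log_le_log (by norm_num) hdR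
  have hfinal : Real.log 2 / d < (2 ^ d - 2) / 2 ^ d * (Real.log d / d) := by
    rw [div_lt_iff₀ hd0] at *
    have hlog3pos : 0 < Real.log 3 := Real.log_pos (by norm_num)
    have : Real.log 2 < (2 ^ d - 2) / 2 ^ d * Real.log d := by
      calc Real.log 2 < 3 / 4 * Real.log 3 := hlog3
        _ ≤ (2 ^ d - 2) / 2 ^ d * Real.log d := by
            apply mul_le_mul hfrac hlogd (le_of_lt hlog3pos)
            linarith [hfrac]
      
    calc Real.log 2 < (2 ^ d - 2) / 2 ^ d * Real.log d := this
      _ = (2 ^ d - 2) / 2 ^ d * (Real.log d / d) * d := by field_simp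
  calc Real.log 2 / d < (2 ^ d - 2) / 2 ^ d * (Real.log d / d) := hfinal
    _ = ∑ k ∈ Finset.Ico 1 d, (d.choose k : ℝ) / 2 ^ d * (Real.log d / d) := hsum.symm
    _ ≤ _ := hstep.trans hsub

/-- Indicator problem, d ≥ 3: the expected posterior entropy E_{x_U}[H(Y ∣ x_U)]
(over the values of all features other than the candidate) is strictly larger when the
candidate is the indicator than when it is any of the first d features; equivalently,
∑_{k=0}^d C(d,k) 2^{-d} H_b(k/d) > (log 2)/d. -/
theorem stmt11 (d : ℕ) (hd : 3 ≤ d) :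
    (∀ i : Fin d,
      (∑ b : {k : Fin d // k ≠ i} → Bool, ∑ j : Fin d,
        (1 / ((2 : ℝ) ^ (d - 1) * d)) *
          condEntY d (Finset.univ.filter fun ω =>
            (∀ (k : Fin d) (h : k ≠ i), ω.1 k = b ⟨k, h⟩) ∧ ω.2 = j))
      <
      (∑ b : Fin d → Bool, ((2 : ℝ) ^ d)⁻¹ *
        condEntY d (Finset.univ.filter fun ω => ω.1 = b))) ∧
    Real.log 2 / d <
      ∑ k ∈ Finset.range (d + 1),
        (d.choose k : ℝ) / 2 ^ d * Real.binEntropy ((k : ℝ) / d) := by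
  have hd0 : 0 < d := by omega
  refine ⟨fun i => ?_, key_ineq d hd⟩
  rw [lhs_eq d hd0 i, rhs_eq d hd0]
  exact key_ineq d hd
end

section
/- Greedy maximization of the acquisition objective E_{p(x_U | x_O)}[I(X_i; Y | x_O, x_U)], where U = [d+1] \ (O ∪ {i}), acquires the indicator feature first and the correct feature second in the indicator problem with d ≥ 3, achieving exactly 2 acquisitions. -/
open Finset Real

/-- Adjusted acquisition objective at the empty observation set for a binary-feature
candidate i: E_{x_U}[I(Xᵢ; Y ∣ x_U)], where U consists of all other features (the binary
features other than i, together with the indicator), each conditional mutual information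
being computed on the uniform conditional distribution given x_U. -/
noncomputable def objFeat (d : ℕ) (i : Fin d) : ℝ :=
  ∑ b : {k : Fin d // k ≠ i} → Bool, ∑ j : Fin d,
    (1 / ((2 : ℝ) ^ (d - 1) * d)) *
      mi (Ω := {ω : (Fin d → Bool) × Fin d //
            (∀ (k : Fin d) (h : k ≠ i), ω.1 k = b ⟨k, h⟩) ∧ ω.2 = j})
        (fun ω => ω.val.1 ω.val.2) (fun ω => ω.val.1 i)

/-- Adjusted acquisition objective at the empty observation set for the indicator
candidate: E_{x_U}[I(X_{d+1}; Y ∣ x_U)], where U consists of all d binary features. -/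
noncomputable def objInd (d : ℕ) : ℝ :=
  ∑ b : Fin d → Bool, ((2 : ℝ) ^ d)⁻¹ *
    mi (Ω := {ω : (Fin d → Bool) × Fin d // ω.1 = b})
      (fun ω => ω.val.1 ω.val.2) (fun ω => ω.val.2)

/-- Conditional mutual information I(X_k; Y ∣ X_{d+1} = j) in the indicator problem. -/
noncomputable def miAfterInd (d : ℕ) (j k : Fin d) : ℝ :=
  mi (Ω := {ω : (Fin d → Bool) × Fin d // ω.2 = j})
    (fun ω => ω.val.1 ω.val.2) (fun ω => ω.val.1 k)

/-! ### Auxiliary lemmas -/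

section transport
variable {Ω Ω' A B : Type*} [Fintype Ω] [Fintype Ω'] [Fintype A] [Fintype B]
  [DecidableEq A] [DecidableEq B]

omit [Fintype A] in
lemma pm_equiv (e : Ω' ≃ Ω) (f : Ω → A) (a : A) : pm (fun ω' => f (e ω')) a = pm f a := by
  unfold pm
  rw [Fintype.card_congr e]
  congr 2
  rw [← Fintype.card_subtype, ← Fintype.card_subtype]
  exact Fintype.card_congr (e.subtypeEquiv (fun ω' => by simp))

omit [Fintype A] [Fintype B] in
lemma pj_equiv (e : Ω' ≃ Ω) (f : Ω → A) (g : Ω → B) (a : A) (b : B) :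
    pj (fun ω' => f (e ω')) (fun ω' => g (e ω')) a b = pj f g a b := by
  unfold pj
  rw [Fintype.card_congr e]
  congr 2
  rw [← Fintype.card_subtype, ← Fintype.card_subtype]
  exact Fintype.card_congr (e.subtypeEquiv (fun ω' => by simp))

lemma mi_equiv (e : Ω' ≃ Ω) (f : Ω → A) (g : Ω → B) :
    mi (fun ω' => f (e ω')) (fun ω' => g (e ω')) = mi f g := by
  unfold mi
  simp only [pm_equiv e, pj_equiv e]

lemma mi_indep (f : Ω → A) (g : Ω → B) (h : ∀ a b, pj f g a b = pm f a * pm g b) :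
    mi f g = 0 := by
  unfold mi
  refine Finset.sum_eq_zero fun a _ => Finset.sum_eq_zero fun b _ => ?_
  rcases eq_or_ne (pj f g a b) 0 with h0 | h0
  · simp [h0]
  · rw [h a b] at h0 ⊢
    rw [div_self h0, Real.log_one, mul_zero]

omit [Fintype A] in
lemma pj_self (f : Ω → A) (a b : A) :
    pj f f a b = if a = b then pm f a else 0 := by
  unfold pj pm
  split_ifs with h
  · subst h; simp
  · have : (Finset.univ.filter fun ω => f ω = a ∧ f ω = b) = ∅ := by
      ext ω; simp; rintro h1 h2; exact h (h1 ▸ h2 ▸ rfl)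
    simp [this]

lemma mi_self_bool (f : Ω → Bool) (h1 : pm f true = 1/2) (h2 : pm f false = 1/2) :
    mi f f = Real.log 2 := by
  unfold mi
  simp only [Fintype.sum_bool, pj_self, h1, h2]
  norm_num
  ring

lemma mi_const_left [Nonempty Ω] (v : A) (g : Ω → B) : mi (fun _ => v) g = 0 := by
  apply mi_indep
  intro a b
  have hpm : pm (fun _ : Ω => v) a = if a = v then 1 else 0 := by
    unfold pm
    split_ifs with h
    · subst h; simp [Fintype.card_ne_zero]
    · have : (Finset.univ.filter fun _ : Ω => v = a) = ∅ := by
        ext ω; simp [Ne.symm h]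
      simp [this]
  rw [hpm]
  unfold pj pm
  split_ifs with h
  · subst h; simp
  · have : (Finset.univ.filter fun ω : Ω => v = a ∧ g ω = b) = ∅ := by
      ext ω; simp [Ne.symm h]
    simp [this]

end transport

section equivs
variable {α β ι : Type*}

def eqSnd' (j : β) : {ω : α × β // ω.2 = j} ≃ α where
  toFun ω := ω.1.1
  invFun x := ⟨(x, j), rfl⟩
  left_inv := by rintro ⟨⟨x, y⟩, rfl⟩; rfl
  right_inv x := rfl

def eqFst' (b : α) : {ω : α × β // ω.1 = b} ≃ β where
  toFun ω := ω.1.2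
  invFun x := ⟨(b, x), rfl⟩
  left_inv := by rintro ⟨⟨x, y⟩, rfl⟩; rfl
  right_inv x := rfl

def eProj [DecidableEq ι] (k : ι) (a : Bool) :
    {f : ι → Bool // f k = a} ≃ ({i : ι // i ≠ k} → Bool) where
  toFun f i := f.1 i.1
  invFun g := ⟨fun i => if h : i = k then a else g ⟨i, h⟩, by simp⟩
  left_inv f := by
    apply Subtype.ext; funext i
    by_cases h : i = k
    · subst h; simp [f.2]
    · simp [h]
  right_inv g := by
    funext i
    simp [i.2]

def eProj2 [DecidableEq ι] {j k : ι} (hjk : j ≠ k) (a b : Bool) :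
    {f : ι → Bool // f j = a ∧ f k = b} ≃ ({i : ι // i ≠ j ∧ i ≠ k} → Bool) where
  toFun f i := f.1 i.1
  invFun g := ⟨fun i => if h : i = j then a else if h' : i = k then b else g ⟨i, h, h'⟩, by
    refine ⟨by simp, ?_⟩
    simp only []
    rw [dif_neg (Ne.symm hjk)]; simp⟩
  left_inv f := by
    apply Subtype.ext; funext i
    by_cases h : i = j
    · subst h; simp [f.2.1]
    · by_cases h' : i = k
      · subst h'; simp [h, f.2.2]
      · simp [h, h']
  right_inv g := by
    funext i
    simp [i.2.1, i.2.2]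

def eB {d : ℕ} (i : Fin d) (b : {k : Fin d // k ≠ i} → Bool) (j : Fin d) :
    Bool ≃ {ω : (Fin d → Bool) × Fin d //
      (∀ (k : Fin d) (h : k ≠ i), ω.1 k = b ⟨k, h⟩) ∧ ω.2 = j} where
  toFun c := ⟨(fun k => if h : k = i then c else b ⟨k, h⟩, j), ⟨fun k h => dif_neg h, rfl⟩⟩
  invFun ω := ω.1.1 i
  left_inv c := by simp
  right_inv ω := by
    obtain ⟨⟨f, y⟩, hf, rfl⟩ := ω
    apply Subtype.ext
    dsimp
    congr 1
    funext k
    by_cases h : k = i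
    · subst h; simp
    · rw [dif_neg h]
      exact (hf k h).symm

end equivs

section counting
variable {d : ℕ}

lemma card_ne (k : Fin d) : Fintype.card {i : Fin d // i ≠ k} = d - 1 := by
  simp [Fintype.card_subtype_compl]

lemma card_ne2 {j k : Fin d} (hjk : j ≠ k) :
    Fintype.card {i : Fin d // i ≠ j ∧ i ≠ k} = d - 2 := by
  rw [Fintype.card_subtype]
  have : (univ.filter fun i : Fin d => i ≠ j ∧ i ≠ k) = univ \ {j, k} := by
    ext i; simp [and_comm]
  rw [this, card_sdiff_of_subset (by simp)]
  simp [card_insert_of_notMem, hjk]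

lemma pm_proj (hd : 1 ≤ d) (k : Fin d) (a : Bool) :
    pm (fun f : Fin d → Bool => f k) a = 1/2 := by
  unfold pm
  have hc : (univ.filter fun f : Fin d → Bool => f k = a).card = 2 ^ (d - 1) := by
    rw [← Fintype.card_subtype, Fintype.card_congr (eProj k a), Fintype.card_fun, card_ne,
      Fintype.card_bool]
  rw [hc]
  have h1 : Fintype.card (Fin d → Bool) = 2 ^ d := by simp
  rw [h1]
  have h2 : (2:ℝ) ^ d = 2 ^ (d-1) * 2 := by
    rw [← pow_succ, Nat.sub_add_cancel hd]
  push_cast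
  rw [h2]
  field_simp

lemma pj_proj {j k : Fin d} (h : j ≠ k) (a c : Bool) :
    pj (fun f : Fin d → Bool => f j) (fun f => f k) a c = 1/4 := by
  have hd : 2 ≤ d := by
    have : Nontrivial (Fin d) := ⟨j, k, h⟩
    have := Fintype.one_lt_card (α := Fin d)
    simp at this; omega
  unfold pj
  have hc : (univ.filter fun f : Fin d → Bool => f j = a ∧ f k = c).card = 2^(d-2) := by
    rw [← Fintype.card_subtype, Fintype.card_congr (eProj2 h a c), Fintype.card_fun, card_ne2 h,
      Fintype.card_bool]
  rw [hc]
  have h1 : Fintype.card (Fin d → Bool) = 2 ^ d := by simp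
  rw [h1]
  have h2 : (2:ℝ) ^ d = 2 ^ (d-2) * 4 := by
    have h4 : (4:ℝ) = 2^2 := by norm_num
    rw [h4, ← pow_add, Nat.sub_add_cancel hd]
  push_cast
  rw [h2]
  field_simp

lemma pm_id_bool (a : Bool) : pm (fun c : Bool => c) a = 1/2 := by
  unfold pm
  rw [show (univ.filter fun c : Bool => c = a) = {a} from by ext c; simp]
  simp

end counting

/-! ### miAfterInd -/

lemma miAfterInd_eq (d : ℕ) (j k : Fin d) :
    miAfterInd d j k = mi (fun x : Fin d → Bool => x j) (fun x => x k) :=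
  (mi_equiv (eqSnd' j).symm _ _).symm

lemma miAfterInd_self {d : ℕ} (j : Fin d) : miAfterInd d j j = Real.log 2 := by
  have hd : 1 ≤ d := j.pos
  rw [miAfterInd_eq]
  exact mi_self_bool _ (pm_proj hd j true) (pm_proj hd j false)

lemma miAfterInd_ne {d : ℕ} {j k : Fin d} (h : k ≠ j) : miAfterInd d j k = 0 := by
  have hd : 1 ≤ d := j.pos
  rw [miAfterInd_eq]
  apply mi_indep
  intro a c
  rw [pj_proj (Ne.symm h), pm_proj hd, pm_proj hd]
  norm_num

/-! ### objFeat -/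

lemma objFeat_eq {d : ℕ} (hd : 1 ≤ d) (i : Fin d) :
    objFeat d i = Real.log 2 / d := by
  unfold objFeat
  have key : ∀ (b : {k : Fin d // k ≠ i} → Bool) (j : Fin d),
      mi (Ω := {ω : (Fin d → Bool) × Fin d //
            (∀ (k : Fin d) (h : k ≠ i), ω.1 k = b ⟨k, h⟩) ∧ ω.2 = j})
        (fun ω => ω.val.1 ω.val.2) (fun ω => ω.val.1 i) =
      if j = i then Real.log 2 else 0 := by
    intro b j
    rw [← mi_equiv (eB i b j) _ _]
    by_cases h : j = i
    · rw [if_pos h]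
      have h1 : (fun c : Bool => ((eB i b j) c).val.1 ((eB i b j) c).val.2) = fun c : Bool => c := by
        funext c; simp [eB, h]
      have h2 : (fun c : Bool => ((eB i b j) c).val.1 i) = fun c : Bool => c := by
        funext c; simp [eB]
      rw [h1, h2]
      exact mi_self_bool _ (pm_id_bool true) (pm_id_bool false)
    · rw [if_neg h]
      have h1 : (fun c : Bool => ((eB i b j) c).val.1 ((eB i b j) c).val.2) =
          fun _ : Bool => b ⟨j, h⟩ := by
        funext c; simp [eB, h]
      have h2 : (fun c : Bool => ((eB i b j) c).val.1 i) = fun c : Bool => c := by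
        funext c; simp [eB]
      rw [h1, h2]
      exact mi_const_left _ _
  simp only [key, mul_ite, mul_zero]
  rw [Finset.sum_congr rfl fun b _ => Finset.sum_ite_eq' univ i
    fun _ => 1 / ((2 : ℝ) ^ (d - 1) * d) * Real.log 2]
  simp only [Finset.mem_univ, if_true]
  rw [Finset.sum_const, Finset.card_univ, Fintype.card_fun, Fintype.card_bool, card_ne,
    nsmul_eq_mul]
  have hd2 : ((2:ℝ) ^ (d-1)) ≠ 0 := by positivity
  have hdd : (d:ℝ) ≠ 0 := by
    have : 0 < d := hd
    positivity
  push_cast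
  field_simp

/-! ### objInd -/

/-- one summand of the entropy -/
noncomputable def ent (d m : ℕ) : ℝ := (m / d : ℝ) * Real.log ((d : ℝ) / m)

lemma mi_fun_id {d : ℕ} (b : Fin d → Bool) :
    mi (fun x : Fin d => b x) (fun x => x) =
      ent d (univ.filter fun x => b x = true).card +
      ent d (univ.filter fun x => b x = false).card := by
  have hpj : ∀ (a : Bool) (x : Fin d),
      pj (fun x : Fin d => b x) (fun x => x) a x = if b x = a then 1/(d:ℝ) else 0 := by
    intro a x
    unfold pj
    have hset : (univ.filter fun y : Fin d => b y = a ∧ y = x) = if b x = a then {x} else ∅ := by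
      split_ifs with h
      · ext y
        simp only [mem_filter, mem_univ, true_and, mem_singleton]
        constructor
        · rintro ⟨h1, rfl⟩; rfl
        · rintro rfl; exact ⟨h, rfl⟩
      · ext y
        simp only [mem_filter, mem_univ, true_and, notMem_empty, iff_false, not_and]
        rintro h1 rfl; exact h h1
    rw [hset]
    split_ifs with h <;> simp
  have hpmi : ∀ x : Fin d, pm (fun x : Fin d => x) x = 1/(d:ℝ) := by
    intro x
    unfold pm
    rw [show (univ.filter fun y : Fin d => y = x) = {x} from by ext y; simp]
    simp
  have hpmb : ∀ a : Bool, pm (fun x : Fin d => b x) a =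
      ((univ.filter fun x => b x = a).card : ℝ) / d := by
    intro a; unfold pm; simp
  unfold mi
  rw [Fintype.sum_bool]
  have key : ∀ a : Bool,
      (∑ x : Fin d, pj (fun x : Fin d => b x) (fun x => x) a x *
        Real.log (pj (fun x : Fin d => b x) (fun x => x) a x /
          (pm (fun x : Fin d => b x) a * pm (fun x : Fin d => x) x))) =
      ent d (univ.filter fun x => b x = a).card := by
    intro a
    set m : ℕ := (univ.filter fun x => b x = a).card with hm
    have hterm : ∀ x : Fin d,
        pj (fun x : Fin d => b x) (fun x => x) a x *
          Real.log (pj (fun x : Fin d => b x) (fun x => x) a x /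
            (pm (fun x : Fin d => b x) a * pm (fun x : Fin d => x) x)) =
        if b x = a then (1/(d:ℝ)) * Real.log ((d:ℝ)/m) else 0 := by
      intro x
      rw [hpj, hpmi, hpmb]
      split_ifs with h
      · have hd0 : (d:ℝ) ≠ 0 := by
          have : 0 < d := x.pos
          positivity
        have hm0 : (m:ℝ) ≠ 0 := by
          have : x ∈ univ.filter fun x => b x = a := by simp [h]
          have : 0 < m := Finset.card_pos.mpr ⟨x, this⟩
          positivity
        congr 2
        field_simp
        rw [← hm, div_self hm0]
      · simp
    rw [Finset.sum_congr rfl fun x _ => hterm x]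
    rw [← Finset.sum_filter, Finset.sum_const, ← hm, nsmul_eq_mul]
    unfold ent
    ring
  rw [key true, key false]

lemma ent_nonneg {d m : ℕ} (hm : m ≤ d) : 0 ≤ ent d m := by
  rcases Nat.eq_zero_or_pos m with h | h
  · simp [ent, h]
  rcases Nat.eq_zero_or_pos d with h' | h'
  · simp [ent, h']
  apply mul_nonneg
  · positivity
  · apply Real.log_nonneg
    rw [le_div_iff₀ (by exact_mod_cast h)]
    simpa using (Nat.cast_le (α := ℝ)).mpr hm

lemma ent_lb1 {d m : ℕ} (h1 : 1 ≤ m) (h2 : 2 * m ≤ d) :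
    Real.log 2 / d ≤ ent d m := by
  have hd0 : (0:ℝ) < d := by
    have : 0 < d := lt_of_lt_of_le (by omega) h2
    exact_mod_cast this
  have hm0 : (0:ℝ) < m := by exact_mod_cast h1
  unfold ent
  have hlog : Real.log 2 ≤ Real.log ((d:ℝ)/m) := by
    apply Real.log_le_log (by norm_num)
    rw [le_div_iff₀ hm0]
    exact_mod_cast h2
  have hq : 1/(d:ℝ) ≤ (m:ℝ)/d := by
    gcongr
    exact_mod_cast h1
  calc Real.log 2 / d = (1/(d:ℝ)) * Real.log 2 := by ring
    _ ≤ ((m:ℝ)/d) * Real.log ((d:ℝ)/m) :=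
        mul_le_mul hq hlog (le_of_lt (Real.log_pos (by norm_num))) (by positivity)

lemma ent_lb2 {d m : ℕ} (h1 : m ≤ d - 1) (h1' : 1 ≤ d) (h2 : d ≤ 2 * m) :
    1 / (2 * (d:ℝ)) ≤ ent d m := by
  have hd0 : (0:ℝ) < d := by exact_mod_cast h1'
  have hm1 : 1 ≤ m := by omega
  have hm0 : (0:ℝ) < m := by exact_mod_cast hm1
  unfold ent
  have hlog : 1/(d:ℝ) ≤ Real.log ((d:ℝ)/m) := by
    have hfrac : (0:ℝ) < (m:ℝ)/d := by positivity
    have := Real.log_le_sub_one_of_pos hfrac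
    have hlogdiv : Real.log ((d:ℝ)/m) = - Real.log ((m:ℝ)/d) := by
      rw [← Real.log_inv]
      congr 1
      field_simp
    rw [hlogdiv]
    have hmd : (m:ℝ) ≤ d - 1 := by
      have : (m:ℝ) ≤ (d - 1 : ℕ) := by exact_mod_cast h1
      have hcast : ((d - 1 : ℕ) : ℝ) = (d:ℝ) - 1 := by
        push_cast [Nat.cast_sub h1']
        ring
      linarith [hcast ▸ this]
    have : (m:ℝ)/d ≤ 1 - 1/d := by
      rw [div_le_iff₀ hd0]
      field_simp
      linarith
    linarith
  have hq : 1/2 ≤ (m:ℝ)/d := by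
    rw [le_div_iff₀ hd0]
    have : (d:ℝ) ≤ 2 * m := by exact_mod_cast h2
    linarith
  calc 1/(2*(d:ℝ)) = (1/2) * (1/(d:ℝ)) := by ring
    _ ≤ ((m:ℝ)/d) * Real.log ((d:ℝ)/m) := mul_le_mul hq hlog (by positivity) (by positivity)

lemma ent_pair {d m m' : ℕ} (hsum : m + m' = d) (h1 : 1 ≤ m) (h2 : 1 ≤ m') :
    (Real.log 2 + 1/2) / d ≤ ent d m + ent d m' := by
  have hd1 : 1 ≤ d := by omega
  have hd0 : (0:ℝ) < d := by exact_mod_cast hd1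
  have hsplit : (Real.log 2 + 1/2) / d = Real.log 2 / d + 1/(2*(d:ℝ)) := by
    field_simp
  rw [hsplit]
  rcases le_or_gt (2 * m) d with h | h
  · have hA := ent_lb1 (d := d) h1 h
    have hB := ent_lb2 (d := d) (show m' ≤ d - 1 by omega) hd1 (by omega)
    linarith
  · have hA := ent_lb1 (d := d) h2 (by omega)
    have hB := ent_lb2 (d := d) (show m ≤ d - 1 by omega) hd1 (by omega)
    linarith

lemma objInd_eq {d : ℕ} :
    objInd d = ∑ b : Fin d → Bool, ((2 : ℝ) ^ d)⁻¹ *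
      (ent d (univ.filter fun x => b x = true).card +
       ent d (univ.filter fun x => b x = false).card) := by
  unfold objInd
  refine Finset.sum_congr rfl fun b _ => ?_
  congr 1
  rw [← mi_fun_id b]
  exact (mi_equiv (eqFst' b).symm _ _).symm

lemma objInd_lb {d : ℕ} (hd : 3 ≤ d) :
    ((2:ℝ)^d)⁻¹ * ((2^d - 2) * ((Real.log 2 + 1/2) / d)) ≤ objInd d := by
  classical
  rw [objInd_eq]
  have hcard : ∀ b : Fin d → Bool,
      (univ.filter fun x => b x = true).card + (univ.filter fun x => b x = false).card = d := by
    intro b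
    have hflt : (univ.filter fun x : Fin d => b x = false) =
        univ.filter fun x => ¬ (b x = true) := by
      ext x; simp
    rw [hflt, Finset.card_filter_add_card_filter_not]
    simp
  have hne : Nonempty (Fin d) := ⟨⟨0, by omega⟩⟩
  obtain ⟨x0⟩ := hne
  have key : ∀ b : Fin d → Bool,
      (if b ≠ (fun _ => true) ∧ b ≠ (fun _ => false) then (Real.log 2 + 1/2) / d else 0) ≤
      ent d (univ.filter fun x => b x = true).card +
        ent d (univ.filter fun x => b x = false).card := by
    intro b
    split_ifs with h
    · apply ent_pair (hcard b)
      · rw [Nat.one_le_iff_ne_zero, Ne, Finset.card_eq_zero, Finset.filter_eq_empty_iff]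
        intro hall
        exact h.2 (funext fun x => by simpa using hall (Finset.mem_univ x))
      · rw [Nat.one_le_iff_ne_zero, Ne, Finset.card_eq_zero, Finset.filter_eq_empty_iff]
        intro hall
        exact h.1 (funext fun x => by simpa using hall (Finset.mem_univ x))
    · have h1 : (univ.filter fun x => b x = true).card ≤ d := by
        have := Finset.card_filter_le (univ : Finset (Fin d)) (fun x => b x = true)
        simpa using this
      have h2 : (univ.filter fun x => b x = false).card ≤ d := by
        have := Finset.card_filter_le (univ : Finset (Fin d)) (fun x => b x = false)
        simpa using this
      have := ent_nonneg h1
      have := ent_nonneg h2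
      linarith
  calc ((2:ℝ)^d)⁻¹ * ((2^d - 2) * ((Real.log 2 + 1/2) / d))
      = ∑ b : Fin d → Bool, ((2:ℝ)^d)⁻¹ *
        (if b ≠ (fun _ => true) ∧ b ≠ (fun _ => false) then (Real.log 2 + 1/2) / d else 0) := by
        rw [← Finset.mul_sum]
        congr 1
        rw [← Finset.sum_filter, Finset.sum_const, nsmul_eq_mul]
        congr 1
        have hset : (univ.filter fun b : Fin d → Bool =>
            b ≠ (fun _ => true) ∧ b ≠ (fun _ => false)) =
            univ \ {(fun _ => true), (fun _ => false)} := by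
          ext b; simp [and_comm]
        rw [hset, card_sdiff_of_subset (by simp)]
        have hne' : (fun _ : Fin d => true) ≠ (fun _ => false) := by
          intro hcontra
          have := congrFun hcontra x0
          simp at this
        rw [card_insert_of_notMem (by simp [hne']), card_singleton]
        have hcu : (univ : Finset (Fin d → Bool)).card = 2^d := by
          simp
        rw [hcu]
        have h2d : (2:ℕ) ≤ 2^d := by
          calc (2:ℕ) ≤ 2^1 := by norm_num
          _ ≤ 2^d := Nat.pow_le_pow_right (by norm_num) (by omega)
        push_cast [Nat.cast_sub h2d]
        norm_num
    _ ≤ ∑ b : Fin d → Bool, ((2:ℝ)^d)⁻¹ *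
        (ent d (univ.filter fun x => b x = true).card +
         ent d (univ.filter fun x => b x = false).card) := by
        apply Finset.sum_le_sum
        intro b _
        have h2pos : (0:ℝ) < ((2:ℝ)^d)⁻¹ := by positivity
        exact mul_le_mul_of_nonneg_left (key b) (le_of_lt h2pos)

lemma final_numeric {d : ℕ} (hd : 3 ≤ d) :
    Real.log 2 / d < ((2:ℝ)^d)⁻¹ * ((2^d - 2) * ((Real.log 2 + 1/2) / d)) := by
  have hd0 : (0:ℝ) < d := by exact_mod_cast (by omega : 0 < d)
  have hN : (8:ℝ) ≤ 2^d := by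
    calc (8:ℝ) = 2^3 := by norm_num
    _ ≤ 2^d := by
        apply pow_le_pow_right₀ (by norm_num) hd
  have hL : Real.log 2 < 0.6931472 := Real.log_two_lt_d9.trans_le (by norm_num)
  have hL0 : 0 < Real.log 2 := Real.log_pos (by norm_num)
  have hrw : ((2:ℝ)^d)⁻¹ * ((2^d - 2) * ((Real.log 2 + 1/2) / d)) =
      ((2^d - 2) * (Real.log 2 + 1/2)) / (2^d * d) := by
    rw [inv_mul_eq_div, mul_div_assoc', div_div, mul_comm ((2:ℝ)^d) (d:ℝ), ← div_div, div_div]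
  rw [hrw, div_lt_div_iff₀ hd0 (by positivity)]
  have hkey : (0:ℝ) < 2^d/2 - 2*Real.log 2 - 1 := by nlinarith
  nlinarith [mul_pos hd0 hkey]

/-- Greedy maximization ... -/
theorem stmt12 (d : ℕ) (hd : 3 ≤ d) :
    (∀ i : Fin d, objFeat d i < objInd d) ∧
    (∀ j : Fin d, miAfterInd d j j = Real.log 2 ∧
      ∀ k : Fin d, k ≠ j → miAfterInd d j k = 0) ∧
    (∀ ω ω' : (Fin d → Bool) × Fin d,
      ω.2 = ω'.2 → ω.1 ω.2 = ω'.1 ω'.2 → ω.1 ω.2 = ω'.1 ω'.2) := by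
  refine ⟨fun i => ?_, fun j => ⟨miAfterInd_self j, fun k hk => miAfterInd_ne hk⟩,
    fun ω ω' _ h => h⟩
  rw [objFeat_eq (by omega) i]
  exact lt_of_lt_of_le (final_numeric hd) (objInd_lb hd)
end

section
/- Any acquisition objective R(x_O, i) that is a function only of the joint marginal distribution p(X_i, Y) assigns to the indicator feature X_{d+1} (at the empty observation set) the same score as it would to a feature independent of Y; in particular, if R assigns score 0 to independent pairs and positive score to any of the binary features X_1,...,X_d, it cannot select the indicator first. -/
open Finset Real

lemma count_fix (d : ℕ) (j : Fin d) (b : Bool) :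
    (Finset.univ.filter fun f : Fin d → Bool => f j = b).card = 2^(d-1) := by
  rw [← Fintype.card_subtype]
  rw [Fintype.card_congr
    (⟨fun f i => f.1 i.1, fun g => ⟨fun i => if h : i = j then b else g ⟨i, h⟩, by simp⟩,
      fun f => by
        ext i
        by_cases h : (i:Fin d) = j
        · subst h; simp [f.2]
        · simp [h],
      fun g => by ext i; simp [i.2]⟩ :
      {f : Fin d → Bool // f j = b} ≃ ({i : Fin d // i ≠ j} → Bool))]
  simp [Fintype.card_fun]

lemma pj_indicator (d : ℕ) (hd : 0 < d) :
    pj (fun ω : (Fin d → Bool) × Fin d => ω.2) (fun ω => ω.1 ω.2) =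
      fun _ _ => (1 / (d:ℝ)) * (1 / 2) := by
  funext j b
  have hset : (Finset.univ.filter fun ω : (Fin d → Bool) × Fin d => ω.2 = j ∧ ω.1 ω.2 = b)
      = (Finset.univ.filter fun f : Fin d → Bool => f j = b) ×ˢ {j} := by
    ext ⟨f, k⟩
    simp only [Finset.mem_filter, Finset.mem_univ, true_and, Finset.mem_product,
      Finset.mem_singleton]
    constructor
    · rintro ⟨rfl, h⟩; exact ⟨h, rfl⟩
    · rintro ⟨h, rfl⟩; exact ⟨rfl, h⟩
  have hcard : Fintype.card ((Fin d → Bool) × Fin d) = 2^d * d := by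
    rw [Fintype.card_prod, Fintype.card_fun, Fintype.card_bool, Fintype.card_fin]
  rw [pj, hset, Finset.card_product, Finset.card_singleton, count_fix, hcard]
  have h2 : (2:ℝ)^d = 2^(d-1) * 2 := by
    rw [← pow_succ]
    congr 1
    omega
  have hd' : (d:ℝ) ≠ 0 := Nat.cast_ne_zero.mpr hd.ne'
  have hp : (2:ℝ)^(d-1) ≠ 0 := by positivity
  push_cast
  rw [h2]
  field_simp

/-- Any acquisition objective R that is a function only of the joint marginal distribution
p(Xᵢ, Y) — and which assigns score 0 to independent (product-form) joints — gives the
indicator feature X_{d+1} score 0 at the empty observation set, since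
p(X_{d+1}, Y) = p(X_{d+1}) p(Y). In particular, if R assigns positive score to each of the
binary features X₁,…,X_d, it cannot select the indicator first. -/
theorem stmt13 (d : ℕ) (hd : 0 < d)
    (R : ∀ (A : Type) [Fintype A] [DecidableEq A], (A → Bool → ℝ) → ℝ)
    (hind : ∀ (A : Type) [Fintype A] [DecidableEq A] (q : A → ℝ) (r : Bool → ℝ),
      R A (fun a b => q a * r b) = 0)
    (hpos : ∀ i : Fin d,
      0 < R Bool (pj (fun ω : (Fin d → Bool) × Fin d => ω.1 i) (fun ω => ω.1 ω.2))) :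
    R (Fin d) (pj (fun ω : (Fin d → Bool) × Fin d => ω.2) (fun ω => ω.1 ω.2)) = 0 ∧
    ∀ i : Fin d,
      R (Fin d) (pj (fun ω : (Fin d → Bool) × Fin d => ω.2) (fun ω => ω.1 ω.2)) <
        R Bool (pj (fun ω : (Fin d → Bool) × Fin d => ω.1 i) (fun ω => ω.1 ω.2)) := by
  have h0 : R (Fin d) (pj (fun ω : (Fin d → Bool) × Fin d => ω.2) (fun ω => ω.1 ω.2)) = 0 := by
    rw [pj_indicator d hd]
    exact hind (Fin d) (fun _ => 1 / (d:ℝ)) (fun _ => 1 / 2)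
  exact ⟨h0, fun i => h0 ▸ hpos i⟩
end
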